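/- arXiv:0707.3417 — 5 statements merged into one kernel-verified Lean document; each statement's English description precedes it below -/
import Mathlib

section
/- Let (τ_i)_{i≥1} be a sequence of nonnegative reals with only finitely many nonzero terms, let S = ∑_{i≥1} τ_i, and for each k ≥ 1 let X_k = ∑_{i≥1} C(i,k) τ_i where C(i,k) is the binomial coefficient. Then for every m ≥ 1, |S − ∑_{k=1}^{m} (−1)^{k−1} X_k| ≤ X_m. -/
/-!
For a single index `i ≥ 1`, Pascal's rule telescopes the partial alternating sum
`∑_{k=1}^m (-1)^(k-1) C(i,k)` to `1 - (-1)^m C(i-1,m)`, so the error of the `m`-th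
truncation is `± C(i-1,m) ≤ C(i,m)`. Weighting by `τ_i ≥ 0` and summing over the finitely many
nonzero `τ_i` gives the bound by the triangle inequality.
-/

open Finset

theorem sum_Icc_neg_one_pow_mul_choose_succ {R : Type*} [CommRing R] (n m : ℕ) :
    ∑ k ∈ Icc 1 m, (-1 : R) ^ (k - 1) * (n + 1).choose k = 1 - (-1) ^ m * n.choose m := by
  induction m with
  | zero => simp
  | succ m ih =>
    rw [sum_Icc_succ_top (by omega), ih, Nat.choose_succ_succ, Nat.add_sub_cancel, pow_succ]
    push_cast
    ring

theorem abs_one_sub_sum_Icc_neg_one_pow_mul_choose_le {R : Type*} [CommRing R] [LinearOrder R]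
    [IsStrictOrderedRing R] {i : ℕ} (hi : i ≠ 0) (m : ℕ) :
    |1 - ∑ k ∈ Icc 1 m, (-1 : R) ^ (k - 1) * i.choose k| ≤ i.choose m := by
  obtain ⟨n, rfl⟩ := Nat.exists_eq_succ_of_ne_zero hi
  rw [sum_Icc_neg_one_pow_mul_choose_succ, sub_sub_cancel, abs_mul, abs_pow, abs_neg, abs_one,
    one_pow, one_mul, Nat.abs_cast]
  exact_mod_cast Nat.choose_le_succ n m

theorem abs_sum_sub_sum_Icc_alternating_le {s : Finset ℕ} (hs : 0 ∉ s) {τ : ℕ → ℝ}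
    (hτ : ∀ i ∈ s, 0 ≤ τ i) (m : ℕ) :
    |∑ i ∈ s, τ i - ∑ k ∈ Icc 1 m, (-1 : ℝ) ^ (k - 1) * ∑ i ∈ s, (i.choose k : ℝ) * τ i|
      ≤ ∑ i ∈ s, (i.choose m : ℝ) * τ i := by
  have hswap : ∑ k ∈ Icc 1 m, (-1 : ℝ) ^ (k - 1) * ∑ i ∈ s, (i.choose k : ℝ) * τ i
      = ∑ i ∈ s, (∑ k ∈ Icc 1 m, (-1 : ℝ) ^ (k - 1) * i.choose k) * τ i := by
    simp_rw [mul_sum, sum_mul, mul_assoc]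
    exact sum_comm
  rw [hswap, ← sum_sub_distrib]
  refine (abs_sum_le_sum_abs _ _).trans (sum_le_sum fun i hi => ?_)
  rw [← one_sub_mul, abs_mul, abs_of_nonneg (hτ i hi)]
  exact mul_le_mul_of_nonneg_right
    (abs_one_sub_sum_Icc_neg_one_pow_mul_choose_le (ne_of_mem_of_not_mem hi hs) m) (hτ i hi)

theorem stmt_4_general (τ : ℕ → ℝ) (hτ0 : τ 0 = 0) (hτ : ∀ i, 0 ≤ τ i)
    (hfin : (Function.support τ).Finite)
    (X : ℕ → ℝ) (hX : ∀ k, X k = ∑' i : ℕ, (Nat.choose i k : ℝ) * τ i)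
    (m : ℕ) :
    |(∑' i : ℕ, τ i) - ∑ k ∈ Finset.Icc 1 m, (-1 : ℝ) ^ (k - 1) * X k| ≤ X m := by
  have hsupp : ∀ k, Function.support (fun i => (i.choose k : ℝ) * τ i) ⊆ hfin.toFinset := by
    intro k
    rw [hfin.coe_toFinset]
    exact Function.support_mul_subset_right _ _
  have hXs : ∀ k, X k = ∑ i ∈ hfin.toFinset, (i.choose k : ℝ) * τ i := fun k =>
    (hX k).trans (tsum_eq_sum' (hsupp k))
  rw [tsum_eq_sum' hfin.coe_toFinset.symm.subset, hXs m]
  simp_rw [hXs]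
  exact abs_sum_sub_sum_Icc_alternating_le (by simpa using hτ0) (fun i _ => hτ i) m

theorem stmt_4 (τ : ℕ → ℝ) (hτ0 : τ 0 = 0) (hτ : ∀ i, 0 ≤ τ i)
    (hfin : (Function.support τ).Finite)
    (X : ℕ → ℝ) (hX : ∀ k, X k = ∑' i : ℕ, (Nat.choose i k : ℝ) * τ i)
    (m : ℕ) (hm : 1 ≤ m) :
    |(∑' i : ℕ, τ i) - ∑ k ∈ Finset.Icc 1 m, (-1 : ℝ) ^ (k - 1) * X k| ≤ X m :=
  stmt_4_general τ hτ0 hτ hfin X hX m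
end

section
/- Let u, v be positive coprime integers with u ≥ v, and let N ≥ 1. For an integer n with 0 ≤ n ≤ (u+v)N, let R(n) be the number of pairs (x,y) ∈ I_N × I_N with ux + vy = n. Then: (I) if 0 ≤ n ≤ vN, then |R(n) − n/(uv)| ≤ 2; (II) if vN < n ≤ uN, then |R(n) − N/u| ≤ 2; (III) if uN < n ≤ (u+v)N, then |R(n) − ((u+v)N − n)/(uv)| ≤ 2. -/
set_option maxHeartbeats 1000000


theorem stmt_6 (u v N : ℤ) (hv : 1 ≤ v) (huv : v ≤ u) (hgcd : IsCoprime u v)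
    (hN : 1 ≤ N) (n : ℤ) (hn0 : 0 ≤ n) (hn : n ≤ (u + v) * N)
    (R : ℤ → ℕ)
    (hR : ∀ k, R k = ((Finset.Icc (0 : ℤ) N ×ˢ Finset.Icc (0 : ℤ) N).filter
        (fun p : ℤ × ℤ => u * p.1 + v * p.2 = k)).card) :
    (n ≤ v * N → |(R n : ℝ) - (n : ℝ) / ((u : ℝ) * v)| ≤ 2) ∧
    (v * N < n → n ≤ u * N → |(R n : ℝ) - (N : ℝ) / (u : ℝ)| ≤ 2) ∧
    (u * N < n → |(R n : ℝ) - (((u : ℝ) + v) * N - n) / ((u : ℝ) * v)| ≤ 2) := by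
  have hv0 : (0:ℤ) < v := hv
  have hu0 : (0:ℤ) < u := lt_of_lt_of_le hv0 huv
  obtain ⟨s, t, hst⟩ := hgcd
  set x0 : ℤ := s * n with hx0def
  set y0 : ℤ := t * n with hy0def
  have hsol : u * x0 + v * y0 = n := by rw [hx0def, hy0def]; linear_combination n * hst
  set a1 : ℤ := -(x0 / v) with ha1def
  set a2 : ℤ := -((N - y0) / u) with ha2def
  set b1 : ℤ := (N - x0) / v with hb1def
  set b2 : ℤ := y0 / u with hb2def
  set a : ℤ := max a1 a2 with hadef
  set b : ℤ := min b1 b2 with hbdef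
  -- key divisibility fact
  have key : ∀ p : ℤ × ℤ, u * p.1 + v * p.2 = n →
      v * ((p.1 - x0) / v) = p.1 - x0 ∧ u * ((p.1 - x0) / v) = y0 - p.2 := by
    intro p hp
    have hd : v ∣ p.1 - x0 := by
      have h1 : v ∣ u * (p.1 - x0) := ⟨y0 - p.2, by linarith⟩
      exact (show IsCoprime v u from ⟨t, s, by linarith⟩).dvd_of_dvd_mul_left h1
    have h2 : v * ((p.1 - x0) / v) = p.1 - x0 := Int.mul_ediv_cancel' hd
    refine ⟨h2, ?_⟩
    have h3 : v * (u * ((p.1 - x0) / v)) = v * (y0 - p.2) := by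
      linear_combination u * h2 + hp - hsol
    exact mul_left_cancel₀ (ne_of_gt hv0) h3
  -- bijection with Icc a b
  have hcard : R n = (Finset.Icc a b).card := by
    rw [hR]
    refine Finset.card_bij' (fun p _ => (p.1 - x0) / v)
      (fun t _ => (x0 + v * t, y0 - u * t)) ?_ ?_ ?_ ?_
    · intro p hp
      simp only [Finset.mem_filter, Finset.mem_product, Finset.mem_Icc] at hp
      obtain ⟨⟨⟨hx1, hx2⟩, ⟨hy1, hy2⟩⟩, heq⟩ := hp
      obtain ⟨h2, h3⟩ := key p heq
      rw [Finset.mem_Icc]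
      constructor
      · rw [hadef, max_le_iff]
        constructor
        · rw [ha1def, neg_le]
          rw [Int.le_ediv_iff_mul_le hv0]
          linarith [h2]
        · rw [ha2def, neg_le]
          rw [Int.le_ediv_iff_mul_le hu0]
          linarith [h3]
      · rw [hbdef, le_min_iff]
        constructor
        · rw [hb1def, Int.le_ediv_iff_mul_le hv0]
          linarith [h2]
        · rw [hb2def, Int.le_ediv_iff_mul_le hu0]
          linarith [h3]
    · intro c hc
      rw [Finset.mem_Icc] at hc
      obtain ⟨hca, hcb⟩ := hc
      rw [hadef, max_le_iff] at hca
      rw [hbdef, le_min_iff] at hcb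
      have h1 : -c ≤ x0 / v := by rw [← neg_le]; exact hca.1
      have h2 : -c ≤ (N - y0) / u := by rw [← neg_le]; exact hca.2
      rw [Int.le_ediv_iff_mul_le hv0] at h1
      rw [Int.le_ediv_iff_mul_le hu0] at h2
      have h3 := (Int.le_ediv_iff_mul_le hv0).mp hcb.1
      have h4 := (Int.le_ediv_iff_mul_le hu0).mp hcb.2
      simp only [Finset.mem_filter, Finset.mem_product, Finset.mem_Icc]
      refine ⟨⟨⟨by linarith, by linarith⟩, ⟨by linarith, by linarith⟩⟩, by linear_combination hsol⟩
    · intro p hp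
      simp only [Finset.mem_filter, Finset.mem_product, Finset.mem_Icc] at hp
      obtain ⟨h2, h3⟩ := key p hp.2
      have : x0 + v * ((p.1 - x0) / v) = p.1 := by linarith
      have : y0 - u * ((p.1 - x0) / v) = p.2 := by linarith
      simp_all
    · intro c hc
      simp only [add_sub_cancel_left]
      exact Int.mul_ediv_cancel_left c (ne_of_gt hv0)
  -- division bounds
  have db : ∀ m d : ℤ, 0 < d → d * (m / d) ≤ m ∧ m < d * (m / d) + d := by
    intro m d hd
    have h1 := Int.mul_ediv_add_emod m d
    have h2 := Int.emod_nonneg m (ne_of_gt hd)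
    have h3 := Int.emod_lt_of_pos m hd
    omega
  have ea1 : v * a1 = -(v * (x0 / v)) := by rw [ha1def]; ring
  have ea2 : u * a2 = -(u * ((N - y0) / u)) := by rw [ha2def]; ring
  have eb1 : v * b1 = v * ((N - x0) / v) := by rw [hb1def]
  have eb2 : u * b2 = u * (y0 / u) := by rw [hb2def]
  have A1l : -x0 ≤ v * a1 := by linarith [(db x0 v hv0).1]
  have A1r : v * a1 < -x0 + v := by linarith [(db x0 v hv0).2]
  have B1u : v * b1 ≤ N - x0 := by linarith [(db (N - x0) v hv0).1]
  have B1l : N - x0 - v < v * b1 := by linarith [(db (N - x0) v hv0).2]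
  have A2l : y0 - N ≤ u * a2 := by linarith [(db (N - y0) u hu0).1]
  have A2r : u * a2 < y0 - N + u := by linarith [(db (N - y0) u hu0).2]
  have B2u : u * b2 ≤ y0 := by linarith [(db y0 u hu0).1]
  have B2l : y0 - u < u * b2 := by linarith [(db y0 u hu0).2]
  set m : ℤ := min (min (N * u) (N * v)) (min n ((u + v) * N - n)) with hmdef
  have huv0 : (0:ℤ) < u * v := mul_pos hu0 hv0
  have hm0 : 0 ≤ m := by
    have h1 : (0:ℤ) ≤ N * u := mul_nonneg (by linarith) hu0.le
    have h2 : (0:ℤ) ≤ N * v := mul_nonneg (by linarith) hv0.le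
    exact le_min (le_min h1 h2) (le_min hn0 (by linarith))
  have hab1 : b ≤ b1 := min_le_left _ _
  have hab2 : b ≤ b2 := min_le_right _ _
  have haa1 : a1 ≤ a := le_max_left _ _
  have haa2 : a2 ≤ a := le_max_right _ _
  -- upper bound
  have Hup : (u * v) * (b - a) ≤ m := by
    refine le_min (le_min ?_ ?_) (le_min ?_ ?_)
    · linarith [mul_le_mul_of_nonneg_left hab1 huv0.le,
        mul_le_mul_of_nonneg_left haa1 huv0.le,
        mul_le_mul_of_nonneg_left B1u hu0.le,
        mul_le_mul_of_nonneg_left A1l hu0.le]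
    · linarith [mul_le_mul_of_nonneg_left hab2 huv0.le,
        mul_le_mul_of_nonneg_left haa2 huv0.le,
        mul_le_mul_of_nonneg_left B2u hv0.le,
        mul_le_mul_of_nonneg_left A2l hv0.le]
    · linarith [mul_le_mul_of_nonneg_left hab2 huv0.le,
        mul_le_mul_of_nonneg_left haa1 huv0.le,
        mul_le_mul_of_nonneg_left B2u hv0.le,
        mul_le_mul_of_nonneg_left A1l hu0.le, hsol]
    · linarith [mul_le_mul_of_nonneg_left hab1 huv0.le,
        mul_le_mul_of_nonneg_left haa2 huv0.le,
        mul_le_mul_of_nonneg_left B1u hu0.le,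
        mul_le_mul_of_nonneg_left A2l hv0.le]
  -- lower bound
  have hm1 : m ≤ N * u := le_trans (min_le_left _ _) (min_le_left _ _)
  have hm2 : m ≤ N * v := le_trans (min_le_left _ _) (min_le_right _ _)
  have hm3 : m ≤ n := le_trans (min_le_right _ _) (min_le_left _ _)
  have hm4 : m ≤ (u + v) * N - n := le_trans (min_le_right _ _) (min_le_right _ _)
  have Hlo : m < (u * v) * (b - a) + 2 * (u * v) := by
    rcases le_total b1 b2 with h | h <;> rcases le_total a1 a2 with h' | h'
    · -- b = b1, a = a2, pair value (u+v)N - n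
      rw [hbdef, min_eq_left h, hadef, max_eq_right h']
      linarith [mul_lt_mul_of_pos_left B1l hu0,
        mul_lt_mul_of_pos_left A2r hv0, hm4]
    · -- b = b1, a = a1, pair value N*u
      rw [hbdef, min_eq_left h, hadef, max_eq_left h']
      linarith [mul_lt_mul_of_pos_left B1l hu0,
        mul_lt_mul_of_pos_left A1r hu0, hm1]
    · -- b = b2, a = a2, pair value N*v
      rw [hbdef, min_eq_right h, hadef, max_eq_right h']
      linarith [mul_lt_mul_of_pos_left B2l hv0,
        mul_lt_mul_of_pos_left A2r hv0, hm2]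
    · -- b = b2, a = a1, pair value n
      rw [hbdef, min_eq_right h, hadef, max_eq_left h']
      linarith [mul_lt_mul_of_pos_left B2l hv0,
        mul_lt_mul_of_pos_left A1r hu0, hm3, hsol]
  have hba : 0 ≤ b + 1 - a := by
    by_contra hc
    push_neg at hc
    have h1 : b - a + 2 ≤ 0 := by omega
    have := mul_le_mul_of_nonneg_left h1 huv0.le
    linarith [Hlo, hm0]
  have hRz : (R n : ℤ) = b + 1 - a := by
    rw [hcard, Int.card_Icc]
    exact Int.toNat_of_nonneg hba
  have master : |(R n : ℤ) * (u * v) - m| ≤ u * v := by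
    rw [abs_le, hRz]
    constructor <;> linarith [Hup, Hlo]
  -- conversion to reals
  have hur : (0:ℝ) < (u:ℝ) := by exact_mod_cast hu0
  have hvr : (0:ℝ) < (v:ℝ) := by exact_mod_cast hv0
  have huvr : (0:ℝ) < (u:ℝ) * v := mul_pos hur hvr
  have final : ∀ c : ℤ, m = c → |(R n : ℝ) - (c:ℝ) / ((u:ℝ) * v)| ≤ 2 := by
    intro c hc
    rw [hc] at master
    have hcast : |(R n : ℝ) * ((u:ℝ) * v) - (c:ℝ)| ≤ (u:ℝ) * v := by
      exact_mod_cast master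
    have heq : (R n : ℝ) - (c:ℝ) / ((u:ℝ) * v)
        = ((R n : ℝ) * ((u:ℝ) * v) - c) / ((u:ℝ) * v) := by
      field_simp
    rw [heq, abs_div, abs_of_pos huvr, div_le_iff₀ huvr]
    linarith [hcast]
  have hvNuN : v * N ≤ u * N := mul_le_mul_of_nonneg_right huv (by linarith)
  refine ⟨?_, ?_, ?_⟩
  · intro h
    have hmv : m = n := by
      rw [hmdef, min_eq_right (show N * v ≤ N * u by linarith [hvNuN]),
        min_eq_left (show n ≤ (u + v) * N - n by linarith [hvNuN]),
        min_eq_right (show n ≤ N * v by linarith)]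
    exact final n hmv
  · intro h h'
    have hmv : m = N * v := by
      rw [hmdef, min_eq_right (show N * v ≤ N * u by linarith [hvNuN])]
      exact min_eq_left (le_min (by linarith) (by linarith [hvNuN]))
    have := final (N * v) hmv
    have he : ((N * v : ℤ) : ℝ) / ((u:ℝ) * v) = (N:ℝ) / (u:ℝ) := by
      push_cast
      rw [mul_div_mul_right _ _ (ne_of_gt hvr)]
    rwa [he] at this
  · intro h
    have hc1 : (u + v) * N - n ≤ n := by linarith [hvNuN]
    have hmv : m = (u + v) * N - n := by
      rw [hmdef, min_eq_right hc1]
      exact min_eq_right (le_min (by linarith [hvNuN]) (by linarith))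
    have := final ((u + v) * N - n) hmv
    have he : (((u + v) * N - n : ℤ) : ℝ) = ((u:ℝ) + v) * N - n := by
      push_cast; ring
    rwa [he] at this
end

section
/- Define α(u,v) = (3u − |v|)/(6u²) for nonzero integers u,v with u ≥ |v| and gcd(u,v)=1. Then α is injective up to sign of v: if α(u₁,v₁) = α(u₂,v₂) for two such pairs, then u₁ = u₂ and |v₁| = |v₂|. -/
/-!
Clearing denominators turns `α(u₁, v₁) = α(u₂, v₂)` into
`(3u₁ - |v₁|) u₂² = (3u₂ - |v₂|) u₁²`. Since `gcd(u₁, 3u₁ - |v₁|) = gcd(u₁, v₁) = 1`,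
this forces `u₁² ∣ u₂²`, hence `u₁ ∣ u₂`; by symmetry `u₁ = u₂`, and then `|v₁| = |v₂|`.
-/

lemma Int.pos_of_isCoprime_of_abs_le {u v : ℤ} (hc : IsCoprime u v) (h : |v| ≤ u) : 0 < u := by
  rcases ((abs_nonneg v).trans h).lt_or_eq with hu | rfl
  · exact hu
  · have hv : |v| = 1 := Int.isUnit_iff_abs_eq.mp (isCoprime_zero_left.mp hc)
    omega

lemma dvd_of_mul_sq_eq_mul_sq {R : Type*} [CommRing R] [IsDomain R] [IsIntegrallyClosed R]
    {a b c w₁ w₂ : R} (hc : IsCoprime a w₁)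
    (h : (c * a - w₁) * b ^ 2 = (c * b - w₂) * a ^ 2) : a ∣ b := by
  have hcop : IsCoprime (a ^ 2) (c * a - w₁) := by
    refine IsCoprime.pow_left ?_
    simpa [sub_eq_neg_add, mul_comm c a] using hc.neg_right.add_mul_left_right c
  rw [← IsIntegrallyClosed.pow_dvd_pow_iff two_ne_zero]
  exact hcop.dvd_of_dvd_mul_left ⟨c * b - w₂, by rw [h, mul_comm]⟩

theorem stmt_8_general (u₁ v₁ u₂ v₂ : ℤ)
    (h₁' : |v₁| ≤ u₁) (hg₁ : IsCoprime u₁ v₁)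
    (h₂' : |v₂| ≤ u₂) (hg₂ : IsCoprime u₂ v₂)
    (hα : (3 * (u₁ : ℚ) - |(v₁ : ℚ)|) / (6 * (u₁ : ℚ) ^ 2)
        = (3 * (u₂ : ℚ) - |(v₂ : ℚ)|) / (6 * (u₂ : ℚ) ^ 2)) :
    u₁ = u₂ ∧ |v₁| = |v₂| := by
  have hu₁ : (0 : ℚ) < u₁ := Int.cast_pos.mpr (Int.pos_of_isCoprime_of_abs_le hg₁ h₁')
  have hu₂ : (0 : ℚ) < u₂ := Int.cast_pos.mpr (Int.pos_of_isCoprime_of_abs_le hg₂ h₂')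
  rw [div_eq_div_iff (by positivity) (by positivity)] at hα
  have hcross : (3 * u₁ - |v₁|) * u₂ ^ 2 = (3 * u₂ - |v₂|) * u₁ ^ 2 := by
    have : (((3 * u₁ - |v₁|) * u₂ ^ 2 : ℤ) : ℚ) = (((3 * u₂ - |v₂|) * u₁ ^ 2 : ℤ) : ℚ) := by
      push_cast
      linear_combination hα / 6
    exact_mod_cast this
  have hu : u₁ = u₂ := Int.dvd_antisymm (by exact_mod_cast hu₁.le) (by exact_mod_cast hu₂.le)
    (dvd_of_mul_sq_eq_mul_sq hg₁.abs_right hcross)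
    (dvd_of_mul_sq_eq_mul_sq hg₂.abs_right hcross.symm)
  subst hu
  refine ⟨rfl, ?_⟩
  have hsq : u₁ ^ 2 ≠ 0 := pow_ne_zero 2 (by exact_mod_cast hu₁.ne')
  linarith [mul_right_cancel₀ hsq hcross]

theorem stmt_8 (u₁ v₁ u₂ v₂ : ℤ)
    (h₁ : 1 ≤ |v₁|) (h₁' : |v₁| ≤ u₁) (hg₁ : IsCoprime u₁ v₁)
    (h₂ : 1 ≤ |v₂|) (h₂' : |v₂| ≤ u₂) (hg₂ : IsCoprime u₂ v₂)
    (hα : (3 * (u₁ : ℚ) - |(v₁ : ℚ)|) / (6 * (u₁ : ℚ) ^ 2)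
        = (3 * (u₂ : ℚ) - |(v₂ : ℚ)|) / (6 * (u₂ : ℚ) ^ 2)) :
    u₁ = u₂ ∧ |v₁| = |v₂| :=
  stmt_8_general u₁ v₁ u₂ v₂ h₁' hg₁ h₂' hg₂ hα
end

section
/- Let u ≥ |v| ≥ 1. The function h(c) := g_{u,v}(c²/u), where g_{u,v}(x) = (u+|v|) − 2|v|(1−e^{−x})/x − (u−|v|)e^{−x}, has Taylor expansion h(c) = c² − α(u,v)·c⁴ + O(c⁶) as c → 0⁺, where α(u,v) = (3u − |v|)/(6u²). Precisely, lim_{c→0⁺} (h(c) − c² + α(u,v)c⁴)/c⁶ exists and is finite. -/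
/-!
Put `x = c² / u`, so that `h c = g x`, `c² = u x`, `α c⁴ = (3u - |v|) x² / 6` and `c⁶ = u³ x³`.
The claim is therefore the third-order Taylor expansion
`g x = u x - (3u - |v|) x² / 6 + (2u - |v|) x³ / 12 + O(x⁴)` at `0`, which follows from the
fourth-order Taylor expansion of `exp (-x)` with Lagrange-type remainder `|x|⁵ / 20`.
-/

open Real Filter Topology

noncomputable def expNegTaylor (x : ℝ) : ℝ := 1 - x + x ^ 2 / 2 - x ^ 3 / 6 + x ^ 4 / 24

lemma abs_exp_neg_sub_expNegTaylor_le {x : ℝ} (hx : |x| ≤ 1) :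
    |exp (-x) - expNegTaylor x| ≤ |x| ^ 5 / 20 := by
  have hsum : ∑ m ∈ Finset.range 5, (-x) ^ m / (m.factorial : ℝ) = expNegTaylor x := by
    simp only [Finset.sum_range_succ, Finset.sum_range_zero, Nat.factorial, expNegTaylor]
    push_cast
    ring
  have hbound := Real.exp_bound (x := -x) (by rwa [abs_neg]) (n := 5) (by norm_num)
  rw [hsum, abs_neg] at hbound
  calc |exp (-x) - expNegTaylor x| ≤ |x| ^ 5 * ((5 : ℕ).succ / ((5 : ℕ).factorial * 5)) := hbound
    _ ≤ |x| ^ 5 / 20 := by norm_num [Nat.factorial]; nlinarith [pow_nonneg (abs_nonneg x) 5]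

lemma tendsto_exp_neg_sub_expNegTaylor_div_pow_four :
    Tendsto (fun x => (exp (-x) - expNegTaylor x) / x ^ 4) (𝓝 0) (𝓝 0) := by
  have hlin : Tendsto (fun x : ℝ => |x| / 20) (𝓝 0) (𝓝 0) := by
    simpa using (continuous_abs.tendsto (0 : ℝ)).div_const 20
  refine squeeze_zero_norm' ?_ hlin
  filter_upwards [Metric.closedBall_mem_nhds (0 : ℝ) one_pos] with x hx
  rw [Metric.mem_closedBall, dist_zero_right, Real.norm_eq_abs] at hx
  rcases eq_or_ne x 0 with rfl | hx0
  · simp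
  rw [Real.norm_eq_abs, abs_div, abs_pow, div_le_iff₀ (by positivity)]
  calc |exp (-x) - expNegTaylor x| ≤ |x| ^ 5 / 20 := abs_exp_neg_sub_expNegTaylor_le hx
    _ = |x| / 20 * |x| ^ 4 := by ring

/-- The function `g_{u,v}` of the paper, with `a = u` and `b = |v|`. -/
noncomputable def expProfile (a b x : ℝ) : ℝ :=
  a + b - 2 * b * (1 - exp (-x)) / x - (a - b) * exp (-x)

lemma expProfile_sub_taylor_div_pow_three (a b : ℝ) {x : ℝ} (hx : x ≠ 0) :
    (expProfile a b x - a * x + (3 * a - b) / 6 * x ^ 2) / x ^ 3 =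
      (2 * a - b) / 12 - (a - b) / 24 * x
        + (2 * b - (a - b) * x) * ((exp (-x) - expNegTaylor x) / x ^ 4) := by
  unfold expProfile expNegTaylor
  field_simp
  ring

lemma tendsto_expProfile_sub_taylor_div_pow_three (a b : ℝ) :
    Tendsto (fun x => (expProfile a b x - a * x + (3 * a - b) / 6 * x ^ 2) / x ^ 3)
      (𝓝[≠] 0) (𝓝 ((2 * a - b) / 12)) := by
  have hlim : Tendsto (fun x => (2 * a - b) / 12 - (a - b) / 24 * x
      + (2 * b - (a - b) * x) * ((exp (-x) - expNegTaylor x) / x ^ 4)) (𝓝 0)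
      (𝓝 ((2 * a - b) / 12 - (a - b) / 24 * 0 + (2 * b - (a - b) * 0) * 0)) :=
    ((continuous_const.sub (continuous_const.mul continuous_id)).tendsto 0).add
      (((continuous_const.sub (continuous_const.mul continuous_id)).tendsto 0).mul
        tendsto_exp_neg_sub_expNegTaylor_div_pow_four)
  simp only [mul_zero, sub_zero, add_zero] at hlim
  refine (hlim.mono_left nhdsWithin_le_nhds).congr' ?_
  filter_upwards [self_mem_nhdsWithin] with x hx
  exact (expProfile_sub_taylor_div_pow_three a b hx).symm

lemma tendsto_sq_div_nhdsGT_nhdsNE {U : ℝ} (hU : 0 < U) :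
    Tendsto (fun c : ℝ => c ^ 2 / U) (𝓝[>] 0) (𝓝[≠] 0) := by
  refine tendsto_nhdsWithin_iff.mpr ⟨?_, ?_⟩
  · have hcont : Tendsto (fun c : ℝ => c ^ 2 / U) (𝓝 0) (𝓝 (0 ^ 2 / U)) :=
      ((continuous_pow 2).tendsto 0).div_const U
    simpa using hcont.mono_left nhdsWithin_le_nhds
  · filter_upwards [self_mem_nhdsWithin] with c (hc : 0 < c)
    exact (div_pos (pow_pos hc 2) hU).ne'

theorem stmt_12_general (u v : ℤ) (hv : 1 ≤ |v|) (huv : |v| ≤ u)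
    (g h : ℝ → ℝ)
    (hg : ∀ x : ℝ, 0 < x → g x = ((u : ℝ) + |(v : ℝ)|)
        - 2 * |(v : ℝ)| * (1 - Real.exp (-x)) / x - ((u : ℝ) - |(v : ℝ)|) * Real.exp (-x))
    (hh : ∀ c : ℝ, h c = g (c ^ 2 / (u : ℝ))) :
    ∃ L : ℝ, Filter.Tendsto
      (fun c : ℝ => (h c - c ^ 2 + (3 * (u : ℝ) - |(v : ℝ)|) / (6 * (u : ℝ) ^ 2) * c ^ 4) / c ^ 6)
      (nhdsWithin 0 (Set.Ioi 0)) (nhds L) := by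
  have hu : (0 : ℝ) < u := by
    have : (0 : ℤ) < u := by omega
    exact_mod_cast this
  set w : ℝ := |(v : ℝ)|
  refine ⟨(2 * u - w) / 12 / (u : ℝ) ^ 3, ?_⟩
  refine (((tendsto_expProfile_sub_taylor_div_pow_three u w).comp
    (tendsto_sq_div_nhdsGT_nhdsNE hu)).div_const ((u : ℝ) ^ 3)).congr' ?_
  filter_upwards [self_mem_nhdsWithin] with c (hc : 0 < c)
  have hx : 0 < c ^ 2 / u := div_pos (pow_pos hc 2) hu
  simp only [Function.comp_apply, hh, hg _ hx, expProfile]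
  field_simp

theorem stmt_12 (u v : ℤ) (hv : 1 ≤ |v|) (huv : |v| ≤ u)
    (g h : ℝ → ℝ)
    (hg : ∀ x : ℝ, 0 < x → g x = ((u : ℝ) + |(v : ℝ)|)
        - 2 * |(v : ℝ)| * (1 - Real.exp (-x)) / x - ((u : ℝ) - |(v : ℝ)|) * Real.exp (-x))
    (hg0 : g 0 = 0)
    (hh : ∀ c : ℝ, h c = g (c ^ 2 / (u : ℝ))) :
    ∃ L : ℝ, Filter.Tendsto
      (fun c : ℝ => (h c - c ^ 2 + (3 * (u : ℝ) - |(v : ℝ)|) / (6 * (u : ℝ) ^ 2) * c ^ 4) / c ^ 6)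
      (nhdsWithin 0 (Set.Ioi 0)) (nhds L) :=
  stmt_12_general u v hv huv g h hg hh
end

section
/- Fix k ≥ 1. The number of unordered k-tuples of unordered pairs of elements of I_N all having the same sum, where all 2k elements involved are distinct, satisfies ξ_{1,k}(N) = ∑_{n=0}^{2N} C(R(n),k), where R(n) is the number of representations of n as a sum of two distinct elements of I_N; and ξ_{1,k}(N)/N^{k+1} → 4/(2^{k+1}(k+1)!) as N → ∞. -/
open scoped Classical

/-! Grouping the families by their common sum n, a family of k pairs with sum n is just a k-subset
of the R(n) pairs with sum n: two distinct pairs a < b, a' < b' with a + b = a' + b' automatically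
have four distinct entries. Explicitly R(n) = ⌊(n+1)/2⌋ - (n - N), which is symmetric about
n = N, so summing C(R(n), k) by the hockey-stick identity gives the closed form
ξ(N) = 2 (C(⌊N/2⌋ + 1, k+1) + C(⌊(N+1)/2⌋, k+1)) + C(⌊(N+1)/2⌋, k),
whence ξ(N) ~ 4 (N/2)^{k+1}/(k+1)!. -/

open Finset Filter Nat Asymptotics Topology

theorem card_filter_powersetCard_const_eq_sum_choose {α β : Type*} [DecidableEq β]
    (P : Finset α) (f : α → β) (S : Finset β) (hS : ∀ a ∈ P, f a ∈ S) {k : ℕ} (hk : k ≠ 0) :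
    ((P.powersetCard k).filter (fun T => ∀ a ∈ T, ∀ b ∈ T, f a = f b)).card
      = ∑ n ∈ S, (P.filter (f · = n)).card.choose k := by
  have hfibres : (P.powersetCard k).filter (fun T => ∀ a ∈ T, ∀ b ∈ T, f a = f b)
      = S.biUnion (fun n => (P.filter (f · = n)).powersetCard k) := by
    ext T
    simp only [mem_filter, mem_powersetCard, mem_biUnion, subset_iff]
    constructor
    · rintro ⟨⟨hTP, hcard⟩, hconst⟩
      obtain ⟨a, ha⟩ := card_pos.mp (hcard ▸ Nat.pos_of_ne_zero hk)
      exact ⟨f a, hS a (hTP ha), fun b hb => ⟨hTP hb, hconst b hb a ha⟩, hcard⟩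
    · rintro ⟨n, -, hTn, hcard⟩
      exact ⟨⟨fun a ha => (hTn ha).1, hcard⟩, fun a ha b hb => (hTn ha).2.trans (hTn hb).2.symm⟩
  rw [hfibres, card_biUnion]
  · simp only [card_powersetCard]
  · intro n _ m _ hnm
    refine disjoint_left.mpr fun T hTn hTm => ?_
    rw [mem_powersetCard] at hTn hTm
    obtain ⟨a, ha⟩ := card_pos.mp (hTn.2 ▸ Nat.pos_of_ne_zero hk)
    exact hnm ((mem_filter.mp (hTn.1 ha)).2.symm.trans (mem_filter.mp (hTm.1 ha)).2)

theorem Prod.entries_ne_of_lt_of_add_eq {q q' : ℕ × ℕ} (hq : q.1 < q.2) (hq' : q'.1 < q'.2)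
    (hsum : q.1 + q.2 = q'.1 + q'.2) (hne : q ≠ q') :
    q.1 ≠ q'.1 ∧ q.1 ≠ q'.2 ∧ q.2 ≠ q'.1 ∧ q.2 ≠ q'.2 := by
  rw [Ne, Prod.ext_iff, not_and_or] at hne
  omega

theorem card_equal_sum_families_eq_sum_choose {k : ℕ} (hk : k ≠ 0) (N : ℕ) :
    (Finset.filter
        (fun T : Finset (ℕ × ℕ) =>
          (∀ q ∈ T, ∀ q' ∈ T, q.1 + q.2 = q'.1 + q'.2) ∧
          (∀ q ∈ T, ∀ q' ∈ T, q ≠ q' →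
            q.1 ≠ q'.1 ∧ q.1 ≠ q'.2 ∧ q.2 ≠ q'.1 ∧ q.2 ≠ q'.2))
        (((Icc 0 N ×ˢ Icc 0 N).filter (fun q : ℕ × ℕ => q.1 < q.2)).powersetCard k)).card
      = ∑ n ∈ range (2 * N + 1),
          ((Icc 0 N ×ˢ Icc 0 N).filter
            (fun q : ℕ × ℕ => q.1 < q.2 ∧ q.1 + q.2 = n)).card.choose k := by
  set P := (Icc 0 N ×ˢ Icc 0 N).filter (fun q : ℕ × ℕ => q.1 < q.2)
  have hP : ∀ q ∈ P, q.1 ≤ N ∧ q.2 ≤ N ∧ q.1 < q.2 := fun q hq => by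
    simp only [P, mem_filter, mem_product, mem_Icc] at hq
    omega
  rw [filter_congr (q := fun T => ∀ q ∈ T, ∀ q' ∈ T, q.1 + q.2 = q'.1 + q'.2)]
  · have h := card_filter_powersetCard_const_eq_sum_choose P (fun q => q.1 + q.2)
      (range (2 * N + 1)) (fun q hq => mem_range.mpr (by linarith [hP q hq])) hk
    simp only [P, filter_filter] at h ⊢
    convert h using 3
  · intro T hT
    rw [mem_powersetCard] at hT
    exact ⟨And.left, fun hsum => ⟨hsum, fun q hq q' hq' => Prod.entries_ne_of_lt_of_add_eq
      (hP q (hT.1 hq)).2.2 (hP q' (hT.1 hq')).2.2 (hsum q hq q' hq')⟩⟩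

theorem card_filter_lt_add_eq (N n : ℕ) :
    ((Icc 0 N ×ˢ Icc 0 N).filter (fun q : ℕ × ℕ => q.1 < q.2 ∧ q.1 + q.2 = n)).card
      = (n + 1) / 2 - (n - N) := by
  rw [← Nat.card_Ico]
  symm
  refine card_bij (fun a _ => (a, n - a)) ?_ ?_ ?_
  · intro a ha
    simp only [mem_Ico] at ha
    simp only [mem_filter, mem_product, mem_Icc]
    omega
  · intro a₁ _ a₂ _ h
    exact (Prod.mk.inj h).1
  · rintro ⟨a, b⟩ hab
    simp only [mem_filter, mem_product, mem_Icc] at hab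
    refine ⟨a, ?_, ?_⟩
    · simp only [mem_Ico]; omega
    · simp only [Prod.mk.injEq, true_and]
      omega

theorem sum_range_choose_half {k : ℕ} (hk : k ≠ 0) (N : ℕ) :
    ∑ n ∈ range N, ((n + 1) / 2).choose k
      = ((N + 2) / 2).choose (k + 1) + ((N + 1) / 2).choose (k + 1) := by
  induction N with
  | zero => simp [Nat.choose_eq_zero_of_lt (by omega : 1 < k + 1)]
  | succ N ih =>
    rw [sum_range_succ, ih, show (N + 1 + 2) / 2 = (N + 1) / 2 + 1 by omega,
      show (N + 1 + 1) / 2 = (N + 2) / 2 by omega, Nat.choose_succ_succ']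
    ring

theorem sum_range_choose_half_sub (k : ℕ) (hk : k ≠ 0) (N : ℕ) :
    ∑ n ∈ range (2 * N + 1), ((n + 1) / 2 - (n - N)).choose k
      = 2 * (((N + 2) / 2).choose (k + 1) + ((N + 1) / 2).choose (k + 1))
        + ((N + 1) / 2).choose k := by
  have hlow : ∑ n ∈ range N, ((n + 1) / 2 - (n - N)).choose k
      = ∑ n ∈ range N, ((n + 1) / 2).choose k :=
    sum_congr rfl fun n hn => by rw [mem_range] at hn; congr 1; omega
  have hhigh : ∑ i ∈ range (N + 1), ((N + i + 1) / 2 - (N + i - N)).choose k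
      = ∑ i ∈ range (N + 1), ((N - i + 1) / 2).choose k :=
    sum_congr rfl fun i hi => by rw [mem_range] at hi; congr 1; omega
  have hreflect : ∑ i ∈ range (N + 1), ((N - i + 1) / 2).choose k
      = ∑ i ∈ range (N + 1), ((i + 1) / 2).choose k := by
    simpa using sum_range_reflect (fun i => ((i + 1) / 2).choose k) (N + 1)
  rw [show 2 * N + 1 = N + (N + 1) by ring, sum_range_add, hlow, hhigh, hreflect,
    sum_range_succ, sum_range_choose_half hk]
  ring

theorem tendsto_choose_div_pow {x : ℕ → ℕ} {L : ℝ} (hx_top : Tendsto x atTop atTop)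
    (hx : Tendsto (fun N => (x N : ℝ) / N) atTop (𝓝 L)) (j : ℕ) :
    Tendsto (fun N => ((x N).choose j : ℝ) / (N : ℝ) ^ j) atTop (𝓝 (L ^ j / j !)) := by
  have hequiv := ((isEquivalent_choose j).comp_tendsto hx_top).div
    (IsEquivalent.refl (u := fun N : ℕ => (N : ℝ) ^ j))
  refine (hequiv.tendsto_nhds_iff).mpr ?_
  refine ((hx.pow j).div_const (j ! : ℝ)).congr fun N => ?_
  simp only [Function.comp_apply, Pi.div_apply, div_pow]
  ring

theorem tendsto_add_div_two_div (c : ℕ) :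
    Tendsto (fun N : ℕ => (((N + c) / 2 : ℕ) : ℝ) / N) atTop (𝓝 (1 / 2)) := by
  have hlower : Tendsto (fun N : ℕ => 1 / 2 - 1 / 2 * (1 / (N : ℝ))) atTop (𝓝 (1 / 2)) := by
    simpa using (tendsto_one_div_atTop_nhds_zero_nat.const_mul (1 / 2 : ℝ)).const_sub (1 / 2 : ℝ)
  have hupper : Tendsto (fun N : ℕ => 1 / 2 + c / 2 * (1 / (N : ℝ))) atTop (𝓝 (1 / 2)) := by
    simpa using (tendsto_one_div_atTop_nhds_zero_nat.const_mul (c / 2 : ℝ)).const_add (1 / 2 : ℝ)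
  have hfloor (N : ℕ) : (N : ℝ) ≤ 2 * (((N + c) / 2 : ℕ) : ℝ) + 1 ∧
      2 * (((N + c) / 2 : ℕ) : ℝ) ≤ N + c := by
    constructor <;> norm_cast <;> omega
  refine tendsto_of_tendsto_of_tendsto_of_le_of_le' hlower hupper ?_ ?_ <;>
    filter_upwards [eventually_gt_atTop 0] with N hN <;>
    have hN' : (0 : ℝ) < N := by exact_mod_cast hN
  · rw [le_div_iff₀ hN']
    field_simp
    linarith [(hfloor N).1]
  · rw [div_le_iff₀ hN']
    field_simp
    linarith [(hfloor N).2]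

theorem tendsto_choose_add_div_two_div_pow (c j : ℕ) :
    Tendsto (fun N : ℕ => (((N + c) / 2).choose j : ℝ) / (N : ℝ) ^ j) atTop
      (𝓝 ((1 / 2) ^ j / j !)) :=
  tendsto_choose_div_pow (tendsto_atTop_atTop.mpr fun b => ⟨2 * b, fun N hN => by omega⟩)
    (tendsto_add_div_two_div c) j

theorem stmt_19 (k : ℕ) (hk : 1 ≤ k)
    (ξ : ℕ → ℕ) (R : ℕ → ℕ → ℕ)
    (hR : ∀ N n, R N n = ((Finset.Icc 0 N ×ˢ Finset.Icc 0 N).filter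
        (fun q : ℕ × ℕ => q.1 < q.2 ∧ q.1 + q.2 = n)).card)
    (hξ : ∀ N, ξ N =
      (Finset.filter
        (fun T : Finset (ℕ × ℕ) =>
          (∀ q ∈ T, ∀ q' ∈ T, q.1 + q.2 = q'.1 + q'.2) ∧
          (∀ q ∈ T, ∀ q' ∈ T, q ≠ q' →
            q.1 ≠ q'.1 ∧ q.1 ≠ q'.2 ∧ q.2 ≠ q'.1 ∧ q.2 ≠ q'.2))
        (((Finset.Icc 0 N ×ˢ Finset.Icc 0 N).filter
          (fun q : ℕ × ℕ => q.1 < q.2)).powersetCard k)).card) :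
    (∀ N : ℕ, ξ N = ∑ n ∈ Finset.range (2 * N + 1), Nat.choose (R N n) k) ∧
    Filter.Tendsto (fun N : ℕ => (ξ N : ℝ) / (N : ℝ) ^ (k + 1))
      Filter.atTop (nhds (4 / (2 ^ (k + 1) * (Nat.factorial (k + 1))))) := by
  have hk0 : k ≠ 0 := Nat.one_le_iff_ne_zero.mp hk
  have hξR (N : ℕ) : ξ N = ∑ n ∈ range (2 * N + 1), (R N n).choose k := by
    simp only [hξ, hR, card_equal_sum_families_eq_sum_choose hk0]
  have hξ_closed (N : ℕ) : ξ N = 2 * (((N + 2) / 2).choose (k + 1) + ((N + 1) / 2).choose (k + 1))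
      + ((N + 1) / 2).choose k := by
    simp only [hξR, hR, card_filter_lt_add_eq, sum_range_choose_half_sub k hk0]
  refine ⟨hξR, ?_⟩
  have hlim := (((tendsto_choose_add_div_two_div_pow 2 (k + 1)).add
    (tendsto_choose_add_div_two_div_pow 1 (k + 1))).const_mul 2).add
    ((tendsto_choose_add_div_two_div_pow 1 k).mul tendsto_one_div_atTop_nhds_zero_nat)
  convert hlim using 2 with N
  · rw [hξ_closed, pow_succ]
    push_cast
    ring
  · rw [mul_zero, add_zero, div_pow, one_pow]
    field_simp
    ring
end
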